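/- For n ≥ 4, a cube Q ⊂ ℝⁿ of side length ℓ, and every λ > 0, the Dirichlet counting function satisfies N_Q^D(λ) ≥ (ω(n)ℓⁿ/(2π)ⁿ) λ^{n/2} − (ω(n) n^{3/2} π ℓ^{n−1}/(2π)ⁿ) λ^{(n−1)/2}, where ω(n) is the volume of the unit ball in ℝⁿ. -/

import Mathlib

open Real MeasureTheory
open scoped ENNReal

/-!
With `R = ℓ√Λ/π`, `N_Q^D(Λ)` counts the points of `ℤ_{>0}ⁿ` in the open ball of radius `R`.
Rounding `x ↦ (⌊|xᵢ|⌋ + 1)ᵢ` moves a point by at most `√n`, so it maps the ball of radius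
`r = R - √n` into these lattice points, and each of its fibres is a product of `n` sets of
length `2`. Hence `ω(n) rⁿ ≤ 2ⁿ N_Q^D(Λ)`, and `(R - √n)ⁿ ≥ Rⁿ - n√n Rⁿ⁻¹` gives the claim; when
`R ≤ √n` the lower bound is nonpositive.
-/

/-- The volume of the unit ball in `ℝⁿ`: `ω(n) = π^{n/2}/Γ(1 + n/2)`. -/
noncomputable def ballVol (n : ℕ) : ℝ := π ^ ((n : ℝ) / 2) / Real.Gamma ((n : ℝ) / 2 + 1)

lemma ballVol_pos (n : ℕ) : 0 < ballVol n :=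
  div_pos (rpow_pos_of_pos pi_pos _) (Gamma_pos_of_pos (by positivity))

lemma EuclideanSpace.volume_ball_zero_eq_ballVol_mul_pow (n : ℕ) [NeZero n] {r : ℝ}
    (hr : 0 ≤ r) :
    volume (Metric.ball (0 : EuclideanSpace ℝ (Fin n)) r) = ENNReal.ofReal (ballVol n * r ^ n) := by
  rw [EuclideanSpace.volume_ball, Fintype.card_fin, ← ENNReal.ofReal_pow hr,
    ← ENNReal.ofReal_mul (by positivity), ballVol, rpow_div_two_eq_sqrt _ pi_pos.le,
    rpow_natCast, mul_comm]

lemma volume_setOf_natFloor_abs_eq_le (m : ℕ) : volume {t : ℝ | ⌊|t|⌋₊ = m} ≤ 2 := by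
  have hsub : {t : ℝ | ⌊|t|⌋₊ = m} ⊆ Set.Ioc (-(m + 1 : ℝ)) (-m) ∪ Set.Ico (m : ℝ) (m + 1) := by
    intro t ht
    have h := (Nat.floor_eq_iff (abs_nonneg t)).mp ht
    rcases le_or_gt 0 t with h0 | h0
    · rw [abs_of_nonneg h0] at h
      exact Or.inr h
    · rw [abs_of_neg h0] at h
      exact Or.inl ⟨by linarith, by linarith⟩
  calc volume {t : ℝ | ⌊|t|⌋₊ = m}
      ≤ volume (Set.Ioc (-(m + 1 : ℝ)) (-m)) + volume (Set.Ico (m : ℝ) (m + 1)) :=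
        (measure_mono hsub).trans (measure_union_le _ _)
    _ = 2 := by
      rw [Real.volume_Ioc, Real.volume_Ico, neg_sub_neg, add_sub_cancel_left, ENNReal.ofReal_one,
        one_add_one_eq_two]

lemma volume_setOf_natFloor_abs_apply_eq_le {n : ℕ} (m : Fin n → ℕ) :
    volume {x : EuclideanSpace ℝ (Fin n) | ∀ i, ⌊|x i|⌋₊ = m i} ≤ 2 ^ n := by
  have h := (EuclideanSpace.volume_preserving_symm_measurableEquiv_toLp
    (Fin n)).measure_preimage_equiv (Set.pi Set.univ fun i => {t : ℝ | ⌊|t|⌋₊ = m i})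
  calc volume {x : EuclideanSpace ℝ (Fin n) | ∀ i, ⌊|x i|⌋₊ = m i}
      = ∏ i, volume {t : ℝ | ⌊|t|⌋₊ = m i} := by
        rw [← volume_pi_pi, ← h]
        congr 1
        ext x
        simp
    _ ≤ 2 ^ n := by
      simpa using Finset.prod_le_pow_card Finset.univ _ _ fun i _ =>
        volume_setOf_natFloor_abs_eq_le (m i)

lemma sum_sq_natFloor_abs_add_one_lt {n : ℕ} {x : EuclideanSpace ℝ (Fin n)} {r : ℝ}
    (hx : ‖x‖ < r) : ∑ i, ((⌊|x i|⌋₊ + 1 : ℕ) : ℝ) ^ 2 < (r + √n) ^ 2 := by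
  set y : EuclideanSpace ℝ (Fin n) := WithLp.toLp 2 fun i => |x i|
  set a : EuclideanSpace ℝ (Fin n) := WithLp.toLp 2 fun i => ((⌊|x i|⌋₊ + 1 : ℕ) : ℝ)
  have hy : ‖y‖ = ‖x‖ := by
    rw [← sq_eq_sq₀ (norm_nonneg _) (norm_nonneg _), EuclideanSpace.real_norm_sq_eq,
      EuclideanSpace.real_norm_sq_eq]
    simp [y]
  -- each coordinate of `a - y` lies in `(0, 1]`
  have hay : ‖a - y‖ ≤ √n := by
    rw [← sq_le_sq₀ (norm_nonneg _) (sqrt_nonneg _), sq_sqrt n.cast_nonneg,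
      EuclideanSpace.real_norm_sq_eq]
    calc ∑ i, (a - y) i ^ 2 ≤ ∑ _i : Fin n, (1 : ℝ) := by
          gcongr with i
          have h := Nat.lt_floor_add_one |x i|
          have h' := Nat.floor_le (abs_nonneg (x i))
          simp only [a, y, PiLp.sub_apply, Nat.cast_add, Nat.cast_one]
          nlinarith
      _ = n := by simp
  have ha : ‖a‖ < r + √n := calc
    ‖a‖ ≤ ‖y‖ + ‖a - y‖ := norm_le_norm_add_norm_sub' a y
    _ < r + √n := by rw [hy]; exact add_lt_add_of_lt_of_le hx hay
  calc ∑ i, ((⌊|x i|⌋₊ + 1 : ℕ) : ℝ) ^ 2 = ‖a‖ ^ 2 := by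
        rw [EuclideanSpace.real_norm_sq_eq]
    _ < (r + √n) ^ 2 := by gcongr

def posLatticeBall (n : ℕ) (R : ℝ) : Set (Fin n → ℕ) :=
  {a | (∀ i, 0 < a i) ∧ ∑ i, (a i : ℝ) ^ 2 < R ^ 2}

lemma finite_posLatticeBall (n : ℕ) (R : ℝ) : (posLatticeBall n R).Finite := by
  refine (Set.Finite.pi fun _ => Set.finite_Iic ⌈|R|⌉₊).subset ?_
  rintro a ⟨-, hsum⟩ i -
  have hi : (a i : ℝ) ^ 2 < R ^ 2 :=
    (Finset.single_le_sum (fun j _ => sq_nonneg (a j : ℝ)) (Finset.mem_univ i)).trans_lt hsum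
  have hi' : (a i : ℝ) < ⌈|R|⌉₊ := by
    have := sq_lt_sq.mp hi
    rw [Nat.abs_cast] at this
    exact this.trans_le (Nat.le_ceil _)
  exact_mod_cast hi'.le

lemma ballVol_mul_pow_le_two_pow_mul_card (n : ℕ) [NeZero n] {r : ℝ} (hr : 0 ≤ r) :
    ballVol n * r ^ n ≤ 2 ^ n * Nat.card (posLatticeBall n (r + √n)) := by
  set F := (finite_posLatticeBall n (r + √n)).toFinset
  have hcover : Metric.ball (0 : EuclideanSpace ℝ (Fin n)) r ⊆
      ⋃ a ∈ F, {x | ∀ i, ⌊|x i|⌋₊ = a i - 1} := by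
    intro x hx
    rw [mem_ball_zero_iff] at hx
    refine Set.mem_biUnion (x := fun i => ⌊|x i|⌋₊ + 1) ?_ fun i => rfl
    rw [Finset.mem_coe, Set.Finite.mem_toFinset]
    exact ⟨fun i => Nat.succ_pos _, sum_sq_natFloor_abs_add_one_lt hx⟩
  have hvol : ENNReal.ofReal (ballVol n * r ^ n) ≤ ENNReal.ofReal (2 ^ n * F.card) := calc
    ENNReal.ofReal (ballVol n * r ^ n) = volume (Metric.ball (0 : EuclideanSpace ℝ (Fin n)) r) :=
      (EuclideanSpace.volume_ball_zero_eq_ballVol_mul_pow n hr).symm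
    _ ≤ ∑ a ∈ F, volume {x : EuclideanSpace ℝ (Fin n) | ∀ i, ⌊|x i|⌋₊ = a i - 1} :=
      (measure_mono hcover).trans (measure_biUnion_finset_le _ _)
    _ ≤ ∑ _a ∈ F, (2 : ℝ≥0∞) ^ n :=
      Finset.sum_le_sum fun a _ => volume_setOf_natFloor_abs_apply_eq_le _
    _ = ENNReal.ofReal (2 ^ n * F.card) := by
      rw [Finset.sum_const, nsmul_eq_mul, mul_comm, ENNReal.ofReal_mul (by positivity),
        ENNReal.ofReal_pow zero_le_two, ENNReal.ofReal_ofNat, ENNReal.ofReal_natCast]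
  rw [Nat.card_eq_card_finite_toFinset (finite_posLatticeBall n (r + √n))]
  exact (ENNReal.ofReal_le_ofReal_iff (by positivity)).mp hvol

lemma pow_sub_mul_pow_pred_le_sub_pow {b s : ℝ} (hs : 0 ≤ s) (hsb : s ≤ b) (n : ℕ) :
    b ^ n - n * s * b ^ (n - 1) ≤ (b - s) ^ n := by
  have h := abs_pow_sub_pow_le b (b - s) n
  rw [sub_sub_cancel, abs_of_nonneg hs, abs_of_nonneg (hs.trans hsb),
    abs_of_nonneg (sub_nonneg.mpr hsb), max_eq_left (by linarith)] at h
  linarith [le_abs_self (b ^ n - (b - s) ^ n)]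

theorem ballVol_mul_sub_le_two_pow_mul_card (n : ℕ) [NeZero n] {R : ℝ} (hR : 0 < R) :
    ballVol n * (R ^ n - n * √n * R ^ (n - 1)) ≤ 2 ^ n * Nat.card (posLatticeBall n R) := by
  rcases le_or_gt R √n with hRn | hRn
  · have hn_one : (1 : ℝ) ≤ n := Nat.one_le_cast.mpr (Nat.pos_of_neZero n)
    have hle : R ^ n ≤ n * √n * R ^ (n - 1) := calc
      R ^ n = R * R ^ (n - 1) := (mul_pow_sub_one (NeZero.ne n) R).symm
      _ ≤ n * √n * R ^ (n - 1) := by gcongr; nlinarith [sqrt_nonneg (n : ℝ)]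
    exact (mul_nonpos_of_nonneg_of_nonpos (ballVol_pos n).le (by linarith)).trans (by positivity)
  · calc ballVol n * (R ^ n - n * √n * R ^ (n - 1)) ≤ ballVol n * (R - √n) ^ n := by
          gcongr
          · exact (ballVol_pos n).le
          · exact pow_sub_mul_pow_pred_le_sub_pow (sqrt_nonneg _) hRn.le n
      _ ≤ 2 ^ n * Nat.card (posLatticeBall n (R - √n + √n)) :=
          ballVol_mul_pow_le_two_pow_mul_card n (sub_nonneg.mpr hRn.le)
      _ = 2 ^ n * Nat.card (posLatticeBall n R) := by rw [sub_add_cancel]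

lemma natCard_dirichletCube_eq_natCard_posLatticeBall (n : ℕ) {ℓ Λ : ℝ} (hℓ : 0 < ℓ)
    (hΛ : 0 ≤ Λ) :
    Nat.card {a : Fin n → ℕ // (∀ i, 0 < a i) ∧ π ^ 2 * (∑ i, (a i : ℝ) ^ 2) / ℓ ^ 2 < Λ} =
      Nat.card (posLatticeBall n (ℓ * √Λ / π)) := by
  refine Nat.card_congr (Equiv.subtypeEquivRight fun a => and_congr_right' ?_)
  rw [div_lt_iff₀ (by positivity), div_pow, mul_pow, sq_sqrt hΛ, lt_div_iff₀ (by positivity),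
    mul_comm Λ, mul_comm (π ^ 2)]

lemma cube_weyl_terms_eq (n : ℕ) [NeZero n] (ℓ : ℝ) {Λ : ℝ} (hΛ : 0 ≤ Λ) :
    ballVol n * ℓ ^ n / (2 * π) ^ n * Λ ^ ((n : ℝ) / 2) -
        ballVol n * (n : ℝ) ^ ((3 : ℝ) / 2) * π * ℓ ^ (n - 1) / (2 * π) ^ n *
          Λ ^ (((n : ℝ) - 1) / 2) =
      ballVol n * ((ℓ * √Λ / π) ^ n - n * √n * (ℓ * √Λ / π) ^ (n - 1)) / 2 ^ n := by
  obtain ⟨m, rfl⟩ := Nat.exists_eq_add_one_of_ne_zero (NeZero.ne n)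
  have h32 : ((m + 1 : ℕ) : ℝ) ^ ((3 : ℝ) / 2) = (m + 1 : ℕ) * √(m + 1 : ℕ) := by
    rw [rpow_div_two_eq_sqrt _ (Nat.cast_nonneg _), show (3 : ℝ) = (3 : ℕ) by norm_num,
      rpow_natCast, pow_succ, sq_sqrt (Nat.cast_nonneg _)]
  rw [h32, rpow_div_two_eq_sqrt _ hΛ, show ((m + 1 : ℕ) : ℝ) - 1 = (m : ℕ) by push_cast; ring,
    rpow_div_two_eq_sqrt _ hΛ, rpow_natCast, rpow_natCast, Nat.add_sub_cancel]
  simp only [div_pow, mul_pow]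
  field_simp [pi_pos.ne']
  ring

/-- For `n ≥ 4`, a cube `Q ⊂ ℝⁿ` of side `ℓ > 0` (Dirichlet
eigenvalues `π²(a₁²+⋯+aₙ²)/ℓ²` over positive integers `aᵢ`), and every `Λ > 0`:
`N_Q^D(Λ) ≥ (ω(n)ℓⁿ/(2π)ⁿ) Λ^{n/2} - (ω(n) n^{3/2} π ℓ^{n-1}/(2π)ⁿ) Λ^{(n-1)/2}`. -/
theorem cube_counting_lower_highdim (n : ℕ) (hn : 4 ≤ n) (ℓ Λ : ℝ) (hℓ : 0 < ℓ)
    (hΛ : 0 < Λ) :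
    ballVol n * ℓ ^ n / (2 * π) ^ n * Λ ^ ((n : ℝ) / 2) -
        ballVol n * (n : ℝ) ^ ((3 : ℝ) / 2) * π * ℓ ^ (n - 1) / (2 * π) ^ n *
          Λ ^ (((n : ℝ) - 1) / 2) ≤
      (Nat.card {a : Fin n → ℕ // (∀ i, 0 < a i) ∧
          π ^ 2 * (∑ i, ((a i : ℝ)) ^ 2) / ℓ ^ 2 < Λ} : ℝ) := by
  have : NeZero n := ⟨by omega⟩
  rw [cube_weyl_terms_eq n ℓ hΛ.le, natCard_dirichletCube_eq_natCard_posLatticeBall n hℓ hΛ.le,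
    div_le_iff₀ (by positivity), mul_comm _ (2 ^ n : ℝ)]
  exact ballVol_mul_sub_le_two_pow_mul_card n (by positivity)
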